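/- arXiv:2508.05586 — 2 statements merged into one kernel-verified Lean document; each statement's English description precedes it below -/
import Mathlib

section
/- Let p₀ : ℝ × ℝ → ℝ be twice continuously differentiable, let ψ : ℝ → ℝ be three times differentiable on an open interval I, and suppose p₀(−ψ'(ξ), ξ) = E for all ξ ∈ I. Set α(ξ) := ∂ₓp₀(−ψ'(ξ), ξ) and Δ(x,ξ) := ∂²ₓp₀(x,ξ)·∂²_ξp₀(x,ξ) − (∂ₓ∂_ξp₀(x,ξ))². Then for all ζ ∈ I, Δ(−ψ'(ζ), ζ) = −(α'(ζ))² + ψ'''(ζ)·α(ζ)·∂²ₓp₀(−ψ'(ζ), ζ). -/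
/-- Partial derivative of `p : ℝ → ℝ → ℝ` in the first (spatial) variable. -/
noncomputable def pdX (p : ℝ → ℝ → ℝ) (x ξ : ℝ) : ℝ := deriv (fun x' => p x' ξ) x

/-- Partial derivative of `p : ℝ → ℝ → ℝ` in the second (momentum) variable. -/
noncomputable def pdXi (p : ℝ → ℝ → ℝ) (x ξ : ℝ) : ℝ := deriv (fun ξ' => p x ξ') ξ

/-- Pure second partial derivative `∂²ₓp`. -/
noncomputable def pdXX (p : ℝ → ℝ → ℝ) (x ξ : ℝ) : ℝ := deriv (fun x' => pdX p x' ξ) x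

/-- Pure second partial derivative `∂²_ξp`. -/
noncomputable def pdXiXi (p : ℝ → ℝ → ℝ) (x ξ : ℝ) : ℝ := deriv (fun ξ' => pdXi p x ξ') ξ

/-- Mixed partial derivative `∂ₓ∂_ξp` (first in `ξ`, then in `x`; for `C²` symbols this agrees
with the other order). -/
noncomputable def pdXXi (p : ℝ → ℝ → ℝ) (x ξ : ℝ) : ℝ := deriv (fun ξ' => pdX p x ξ') ξ

/-- Hessian determinant `Δ(x,ξ) = ∂²ₓp₀·∂²_ξp₀ − (∂ₓ∂_ξp₀)²` of the principal symbol. -/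
noncomputable def hessDelta (p : ℝ → ℝ → ℝ) (x ξ : ℝ) : ℝ :=
  pdXX p x ξ * pdXiXi p x ξ - (pdXXi p x ξ) ^ 2

/-!
Write `γ(ξ) = (−ψ'(ξ), ξ)`, `α = ∂ₓp₀ ∘ γ` and `β = ∂_ξp₀ ∘ γ`. Differentiating the eikonal
equation along `γ` gives `β = ψ''·α`. Differentiating `α` and `β` along `γ` by the chain rule, and
`β` once more as the product `ψ''·α`, expresses `∂_ξ²p₀` and `∂ₓ∂_ξp₀` at `γ(ζ)` through `∂ₓ²p₀`,
`α`, `α'`, `ψ''` and `ψ'''` (using the symmetry of the Hessian); substituting into `Δ` the `ψ''`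
terms cancel.
-/

open Function Filter

theorem fderiv_fderiv_apply {E F : Type*} [NormedAddCommGroup E] [NormedSpace ℝ E]
    [NormedAddCommGroup F] [NormedSpace ℝ F] {f : E → F} {q : E} (v w : E)
    (hf : DifferentiableAt ℝ (fderiv ℝ f) q) :
    fderiv ℝ (fun q => fderiv ℝ f q v) q w = fderiv ℝ (fderiv ℝ f) q w v := by
  rw [fderiv_clm_apply hf (differentiableAt_const v)]
  simp

section Partials

variable {p : ℝ → ℝ → ℝ}

theorem DifferentiableAt.pdX_eq_fderiv {x ξ : ℝ} (hp : DifferentiableAt ℝ (uncurry p) (x, ξ)) :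
    pdX p x ξ = fderiv ℝ (uncurry p) (x, ξ) (1, 0) := by
  have h : HasDerivAt (fun x' => p x' ξ) (fderiv ℝ (uncurry p) (x, ξ) (1, 0)) x :=
    HasFDerivAt.comp_hasDerivAt (l := uncurry p) x hp.hasFDerivAt
      ((hasDerivAt_id x).prodMk (hasDerivAt_const x ξ))
  exact h.deriv

theorem DifferentiableAt.pdXi_eq_fderiv {x ξ : ℝ} (hp : DifferentiableAt ℝ (uncurry p) (x, ξ)) :
    pdXi p x ξ = fderiv ℝ (uncurry p) (x, ξ) (0, 1) := by
  have h : HasDerivAt (fun ξ' => p x ξ') (fderiv ℝ (uncurry p) (x, ξ) (0, 1)) ξ :=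
    HasFDerivAt.comp_hasDerivAt (l := uncurry p) ξ hp.hasFDerivAt
      ((hasDerivAt_const ξ x).prodMk (hasDerivAt_id ξ))
  exact h.deriv

theorem DifferentiableAt.hasDerivAt_comp_prodMk {u v : ℝ → ℝ} {u' v' t : ℝ}
    (hp : DifferentiableAt ℝ (uncurry p) (u t, v t)) (hu : HasDerivAt u u' t)
    (hv : HasDerivAt v v' t) :
    HasDerivAt (fun s => p (u s) (v s)) (pdX p (u t) (v t) * u' + pdXi p (u t) (v t) * v') t := by
  have hchain : HasDerivAt (fun s => p (u s) (v s)) (fderiv ℝ (uncurry p) (u t, v t) (u', v')) t :=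
    HasFDerivAt.comp_hasDerivAt (l := uncurry p) t hp.hasFDerivAt (hu.prodMk hv)
  have hsplit : ((u', v') : ℝ × ℝ) = u' • ((1 : ℝ), (0 : ℝ)) + v' • ((0 : ℝ), (1 : ℝ)) := by
    simp
  rw [hsplit, map_add, map_smul, map_smul, ← hp.pdX_eq_fderiv, ← hp.pdXi_eq_fderiv] at hchain
  simpa only [smul_eq_mul, mul_comm] using hchain

theorem uncurry_pdX_eq {n : WithTop ℕ∞} (hp : ContDiff ℝ (n + 1) (uncurry p)) :
    uncurry (pdX p) = fun q => fderiv ℝ (uncurry p) q (1, 0) :=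
  funext fun q => (hp.differentiable (by simp) q).pdX_eq_fderiv

theorem uncurry_pdXi_eq {n : WithTop ℕ∞} (hp : ContDiff ℝ (n + 1) (uncurry p)) :
    uncurry (pdXi p) = fun q => fderiv ℝ (uncurry p) q (0, 1) :=
  funext fun q => (hp.differentiable (by simp) q).pdXi_eq_fderiv

theorem contDiff_uncurry_pdX {n : WithTop ℕ∞} (hp : ContDiff ℝ (n + 1) (uncurry p)) :
    ContDiff ℝ n (uncurry (pdX p)) := by
  rw [uncurry_pdX_eq hp]
  exact (hp.fderiv_right le_rfl).clm_apply contDiff_const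

theorem contDiff_uncurry_pdXi {n : WithTop ℕ∞} (hp : ContDiff ℝ (n + 1) (uncurry p)) :
    ContDiff ℝ n (uncurry (pdXi p)) := by
  rw [uncurry_pdXi_eq hp]
  exact (hp.fderiv_right le_rfl).clm_apply contDiff_const

theorem pdXXi_eq_pdX_pdXi (hp : ContDiff ℝ 2 (uncurry p)) (x ξ : ℝ) :
    pdXXi p x ξ = pdX (pdXi p) x ξ := by
  have hX := contDiff_uncurry_pdX (n := 1) hp
  have hXi := contDiff_uncurry_pdXi (n := 1) hp
  have hd := (hp.fderiv_right (m := 1) (by norm_num)).differentiable (by simp) (x, ξ)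
  rw [pdXXi, ← pdXi, (hX.differentiable (by simp) _).pdXi_eq_fderiv,
    (hXi.differentiable (by simp) _).pdX_eq_fderiv, uncurry_pdX_eq (n := 1) hp,
    uncurry_pdXi_eq (n := 1) hp, fderiv_fderiv_apply _ _ hd, fderiv_fderiv_apply _ _ hd]
  exact ((hp.contDiffAt).isSymmSndFDerivAt (by simp)).eq _ _ |>.symm

theorem pdXi_eq_mul_pdX_of_eikonal {s : Set ℝ} {φ φ' : ℝ → ℝ} {E ξ : ℝ}
    (hp : Differentiable ℝ (uncurry p)) (hs : IsOpen s)
    (hφ : ∀ ξ ∈ s, HasDerivAt φ (φ' ξ) ξ) (heik : ∀ ξ ∈ s, p (-φ ξ) ξ = E) (hξ : ξ ∈ s) :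
    pdXi p (-φ ξ) ξ = φ' ξ * pdX p (-φ ξ) ξ := by
  have hchain : HasDerivAt (fun s => p (-φ s) s)
      (pdX p (-φ ξ) ξ * -φ' ξ + pdXi p (-φ ξ) ξ * 1) ξ :=
    (hp _).hasDerivAt_comp_prodMk (hφ ξ hξ).neg (hasDerivAt_id' ξ)
  have hconst : HasDerivAt (fun s => p (-φ s) s) 0 ξ :=
    (hasDerivAt_const ξ E).congr_of_eventuallyEq
      (eventually_of_mem (hs.mem_nhds hξ) heik)
  linarith [hchain.unique hconst]

end Partials

theorem stmt_8_general (p₀ : ℝ → ℝ → ℝ) (a b : ℝ) (ψ' ψ'' ψ''' : ℝ → ℝ) (E : ℝ)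
    (hp : ContDiff ℝ 2 (fun q : ℝ × ℝ => p₀ q.1 q.2))
    (hψ' : ∀ ξ ∈ Set.Ioo a b, HasDerivAt ψ' (ψ'' ξ) ξ)
    (hψ'' : ∀ ξ ∈ Set.Ioo a b, HasDerivAt ψ'' (ψ''' ξ) ξ)
    (heik : ∀ ξ ∈ Set.Ioo a b, p₀ (-(ψ' ξ)) ξ = E) :
    ∀ ζ ∈ Set.Ioo a b,
      hessDelta p₀ (-(ψ' ζ)) ζ
        = -(deriv (fun ξ => pdX p₀ (-(ψ' ξ)) ξ) ζ) ^ 2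
          + ψ''' ζ * pdX p₀ (-(ψ' ζ)) ζ * pdXX p₀ (-(ψ' ζ)) ζ := by
  intro ζ hζ
  have hp : ContDiff ℝ 2 (uncurry p₀) := hp
  have hX := (contDiff_uncurry_pdX (n := 1) hp).differentiable (by simp)
  have hXi := (contDiff_uncurry_pdXi (n := 1) hp).differentiable (by simp)
  have hγ : HasDerivAt (fun ξ => -ψ' ξ) (-ψ'' ζ) ζ := (hψ' ζ hζ).neg
  set x := -ψ' ζ
  have hα : HasDerivAt (fun ξ => pdX p₀ (-ψ' ξ) ξ)
      (pdXX p₀ x ζ * -ψ'' ζ + pdXXi p₀ x ζ * 1) ζ :=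
    (hX _).hasDerivAt_comp_prodMk hγ (hasDerivAt_id' ζ)
  have hβ : HasDerivAt (fun ξ => pdXi p₀ (-ψ' ξ) ξ)
      (pdX (pdXi p₀) x ζ * -ψ'' ζ + pdXiXi p₀ x ζ * 1) ζ :=
    (hXi _).hasDerivAt_comp_prodMk hγ (hasDerivAt_id' ζ)
  have hβ_eikonal : HasDerivAt (fun ξ => pdXi p₀ (-ψ' ξ) ξ)
      (ψ''' ζ * pdX p₀ x ζ + ψ'' ζ * (pdXX p₀ x ζ * -ψ'' ζ + pdXXi p₀ x ζ * 1)) ζ :=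
    ((hψ'' ζ hζ).mul hα).congr_of_eventuallyEq <|
      eventually_of_mem (Ioo_mem_nhds hζ.1 hζ.2) fun ξ hξ =>
        pdXi_eq_mul_pdX_of_eikonal (hp.differentiable (by simp)) isOpen_Ioo hψ' heik hξ
  have hrel := hβ.unique hβ_eikonal
  rw [← pdXXi_eq_pdX_pdXi hp] at hrel
  rw [hessDelta, hα.deriv]
  linear_combination pdXX p₀ x ζ * hrel

/-- Let `p₀` be `C²`, `ψ` three times differentiable on the open interval `I = (a,b)`, with
`p₀(−ψ'(ξ), ξ) = E` on `I`, and `α(ξ) := ∂ₓp₀(−ψ'(ξ), ξ)`. Then for all `ζ ∈ I`,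
`Δ(−ψ'(ζ), ζ) = −(α'(ζ))² + ψ'''(ζ)·α(ζ)·∂²ₓp₀(−ψ'(ζ), ζ)`. -/
theorem stmt_8 (p₀ : ℝ → ℝ → ℝ) (a b : ℝ) (ψ ψ' ψ'' ψ''' : ℝ → ℝ) (E : ℝ)
    (hp : ContDiff ℝ 2 (fun q : ℝ × ℝ => p₀ q.1 q.2))
    (hψ : ∀ ξ ∈ Set.Ioo a b, HasDerivAt ψ (ψ' ξ) ξ)
    (hψ' : ∀ ξ ∈ Set.Ioo a b, HasDerivAt ψ' (ψ'' ξ) ξ)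
    (hψ'' : ∀ ξ ∈ Set.Ioo a b, HasDerivAt ψ'' (ψ''' ξ) ξ)
    (heik : ∀ ξ ∈ Set.Ioo a b, p₀ (-(ψ' ξ)) ξ = E) :
    ∀ ζ ∈ Set.Ioo a b,
      hessDelta p₀ (-(ψ' ζ)) ζ
        = -(deriv (fun ξ => pdX p₀ (-(ψ' ξ)) ξ) ζ) ^ 2
          + ψ''' ζ * pdX p₀ (-(ψ' ζ)) ζ * pdXX p₀ (-(ψ' ζ)) ζ :=
  stmt_8_general p₀ a b ψ' ψ'' ψ''' E hp hψ' hψ'' heik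
end

section
/- Let f₀, f₁, f₂ : ℝ → ℝ with f₀ twice differentiable at τ, f₁ differentiable at τ, f₀'(τ) ≠ 0, and let C₀, C₁ ∈ ℝ. Set ω = f₁(τ)/f₀'(τ) and S̃₂ = (1/f₀'(τ))·(½·(f₁²/f₀')'(τ) − f₂(τ)), and define a₀(t) = C₀·e^{−iωt} and a₁(t) = (C₁ + i·C₀·S̃₂·t)·e^{−iωt}. Then for all t ∈ ℝ, f₀'(τ)·a₁'(t) + i·f₁(τ)·a₁(t) = −(f₁'(τ)·a₀'(t) + i·f₂(τ)·a₀(t)) + (i/2)·f₀''(τ)·a₀''(t); that is, a₁ solves the second transport equation in action-angle variables with the choice D₁(t,E) = i·C₀·S̃₂·t. -/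
/-
Both amplitudes are explicit, so the transport equation reduces to two scalar identities:
the phase `e^{-iωt}` cancels the zeroth-order term exactly when `f₀'(τ)·ω = f₁(τ)`, and the
secular term `iC₀S̃₂t` absorbs the remaining constant forcing exactly when
`f₀'(τ)·S̃₂ = f₁'(τ)·ω − f₂(τ) − ½·f₀''(τ)·ω²`, which is the quotient rule applied to
`(f₁²/f₀')'(τ)`.
-/

/-- Leading amplitude in action-angle variables: `a₀(t) = C₀·e^{−iωt}`. -/
noncomputable def aaA0 (C₀ ω : ℝ) (t : ℝ) : ℂ :=
  (C₀ : ℂ) * Complex.exp (-(Complex.I * (ω : ℂ) * (t : ℂ)))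

/-- Subleading amplitude in action-angle variables:
`a₁(t) = (C₁ + i·C₀·S̃₂·t)·e^{−iωt}`. -/
noncomputable def aaA1 (C₀ C₁ ω S₂ : ℝ) (t : ℝ) : ℂ :=
  ((C₁ : ℂ) + Complex.I * (C₀ : ℂ) * (S₂ : ℂ) * (t : ℂ)) *
    Complex.exp (-(Complex.I * (ω : ℂ) * (t : ℂ)))

open Complex

section Amplitudes

variable (C₀ C₁ ω S₂ : ℝ)

theorem hasDerivAt_phase (t : ℝ) :
    HasDerivAt (fun t : ℝ => -(I * ω * t)) (-(I * ω)) t := by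
  simpa using ((ofRealCLM.hasDerivAt (x := t)).const_mul (I * ω)).fun_neg

theorem hasDerivAt_aaA0 (t : ℝ) :
    HasDerivAt (aaA0 C₀ ω) (-(I * ω) * aaA0 C₀ ω t) t := by
  refine (((hasDerivAt_phase ω t).cexp).const_mul (C₀ : ℂ)).congr_deriv ?_
  rw [aaA0]
  ring

theorem deriv_aaA0 : deriv (aaA0 C₀ ω) = fun t => -(I * ω) * aaA0 C₀ ω t :=
  funext fun t => (hasDerivAt_aaA0 C₀ ω t).deriv

theorem deriv_deriv_aaA0 (t : ℝ) :
    deriv (deriv (aaA0 C₀ ω)) t = (I * ω) ^ 2 * aaA0 C₀ ω t := by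
  rw [deriv_aaA0, ((hasDerivAt_aaA0 C₀ ω t).const_mul (-(I * ω))).deriv]
  ring

theorem hasDerivAt_aaA1 (t : ℝ) :
    HasDerivAt (aaA1 C₀ C₁ ω S₂)
      (I * C₀ * S₂ * exp (-(I * ω * t)) - I * ω * aaA1 C₀ C₁ ω S₂ t) t := by
  have hlin : HasDerivAt (fun t : ℝ => (C₁ : ℂ) + I * C₀ * S₂ * t) (I * C₀ * S₂) t := by
    simpa using ((hasDerivAt_id (t : ℂ)).comp_ofReal.const_mul (I * C₀ * S₂)).const_add
      (C₁ : ℂ)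
  refine (hlin.mul (hasDerivAt_phase ω t).cexp).congr_deriv ?_
  rw [aaA1]
  ring

/-- The second transport equation for `a₀ = aaA0`, `a₁ = aaA1`, with the symbol coefficients
at `τ` abstracted to `f₀' = a`, `f₀'' = a''`, `f₁ = b`, `f₁' = b'`, `f₂ = c`. -/
theorem aaA1_second_transport {a a'' b b' c : ℝ} (hω : a * ω = b)
    (hS : a * S₂ = b' * ω - c - a'' * ω ^ 2 / 2) (t : ℝ) :
    (a : ℂ) * deriv (aaA1 C₀ C₁ ω S₂) t + I * b * aaA1 C₀ C₁ ω S₂ t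
      = -((b' : ℂ) * deriv (aaA0 C₀ ω) t + I * c * aaA0 C₀ ω t)
        + (I / 2) * a'' * deriv (deriv (aaA0 C₀ ω)) t := by
  have hωC : (a : ℂ) * ω = b := by exact_mod_cast hω
  have hSC : (a : ℂ) * S₂ = b' * ω - c - a'' * ω ^ 2 / 2 := by exact_mod_cast hS
  rw [(hasDerivAt_aaA1 C₀ C₁ ω S₂ t).deriv, deriv_deriv_aaA0, deriv_aaA0]
  simp only [aaA0, aaA1]
  set E := exp (-(I * ω * t))
  linear_combination (-(I * E * ((C₁ : ℂ) + I * C₀ * S₂ * t))) * hωC + (I * E * C₀) * hSC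
    + (-(I / 2) * a'' * (ω : ℂ) ^ 2 * C₀ * E) * I_sq

end Amplitudes

theorem deriv_sq_div {g h : ℝ → ℝ} {x : ℝ} (hg : DifferentiableAt ℝ g x)
    (hh : DifferentiableAt ℝ h x) (hx : h x ≠ 0) :
    deriv (fun y => g y ^ 2 / h y) x
      = (2 * g x * deriv g x * h x - g x ^ 2 * deriv h x) / h x ^ 2 := by
  rw [((hg.hasDerivAt.fun_pow 2).fun_div hh.hasDerivAt hx).deriv]
  norm_num

theorem stmt_17_general (f₀ f₁ f₂ : ℝ → ℝ) (τ : ℝ) (C₀ C₁ : ℝ)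
    (hf₀' : DifferentiableAt ℝ (deriv f₀) τ)
    (hf₁ : DifferentiableAt ℝ f₁ τ) (hne : deriv f₀ τ ≠ 0) :
    ∀ t : ℝ,
      (↑(deriv f₀ τ) : ℂ) *
          deriv (aaA1 C₀ C₁ (f₁ τ / deriv f₀ τ)
            ((1 / deriv f₀ τ) *
              ((1 / 2) * deriv (fun σ => (f₁ σ) ^ 2 / deriv f₀ σ) τ - f₂ τ))) t
        + Complex.I * (f₁ τ : ℂ) *
            aaA1 C₀ C₁ (f₁ τ / deriv f₀ τ)
              ((1 / deriv f₀ τ) *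
                ((1 / 2) * deriv (fun σ => (f₁ σ) ^ 2 / deriv f₀ σ) τ - f₂ τ)) t
      = -((↑(deriv f₁ τ) : ℂ) * deriv (aaA0 C₀ (f₁ τ / deriv f₀ τ)) t
            + Complex.I * (f₂ τ : ℂ) * aaA0 C₀ (f₁ τ / deriv f₀ τ) t)
        + (Complex.I / 2) * (↑(deriv (deriv f₀) τ) : ℂ) *
            deriv (deriv (aaA0 C₀ (f₁ τ / deriv f₀ τ))) t := by
  refine aaA1_second_transport C₀ C₁ _ _ ?_ ?_
  · field_simp
  · rw [deriv_sq_div hf₁ hf₀' hne]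
    field_simp
    ring

/-- With `ω = f₁(τ)/f₀'(τ)` and `S̃₂ = (1/f₀'(τ))·(½·(f₁²/f₀')'(τ) − f₂(τ))`,
`a₀(t) = C₀e^{−iωt}` and `a₁(t) = (C₁ + iC₀S̃₂t)e^{−iωt}` satisfy the second transport
equation in action-angle variables:
`f₀'(τ)·a₁' + i·f₁(τ)·a₁ = −(f₁'(τ)·a₀' + i·f₂(τ)·a₀) + (i/2)·f₀''(τ)·a₀''`. -/
theorem stmt_17 (f₀ f₁ f₂ : ℝ → ℝ) (τ : ℝ) (C₀ C₁ : ℝ)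
    (hf₀ : DifferentiableAt ℝ f₀ τ) (hf₀' : DifferentiableAt ℝ (deriv f₀) τ)
    (hf₁ : DifferentiableAt ℝ f₁ τ) (hne : deriv f₀ τ ≠ 0) :
    ∀ t : ℝ,
      (↑(deriv f₀ τ) : ℂ) *
          deriv (aaA1 C₀ C₁ (f₁ τ / deriv f₀ τ)
            ((1 / deriv f₀ τ) *
              ((1 / 2) * deriv (fun σ => (f₁ σ) ^ 2 / deriv f₀ σ) τ - f₂ τ))) t
        + Complex.I * (f₁ τ : ℂ) *
            aaA1 C₀ C₁ (f₁ τ / deriv f₀ τ)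
              ((1 / deriv f₀ τ) *
                ((1 / 2) * deriv (fun σ => (f₁ σ) ^ 2 / deriv f₀ σ) τ - f₂ τ)) t
      = -((↑(deriv f₁ τ) : ℂ) * deriv (aaA0 C₀ (f₁ τ / deriv f₀ τ)) t
            + Complex.I * (f₂ τ : ℂ) * aaA0 C₀ (f₁ τ / deriv f₀ τ) t)
        + (Complex.I / 2) * (↑(deriv (deriv f₀) τ) : ℂ) *
            deriv (deriv (aaA0 C₀ (f₁ τ / deriv f₀ τ))) t :=
  stmt_17_general f₀ f₁ f₂ τ C₀ C₁ hf₀' hf₁ hne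
end
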